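/- Let k be a field and (A, 𝔪) a local k-algebra whose residue field K = A/𝔪 is an algebraic and separable extension of k. Let Ã = K ⊗_k A and let M̃ be the kernel of the evaluation map Ã → K, λ⊗a ↦ λ·a(x). Then the K-linear map ϑ : 𝔪/𝔪² → M̃/M̃² induced by a ↦ 1⊗a is bijective. -/

import Mathlib

/-!
Injectivity: since `K/k` is formally smooth, the residue map `A/𝔪² → K` has a `k`-algebra
section `σ`. Then `σ ⊗ (A → A/𝔪²) : K ⊗_k A → A/𝔪²` maps `M̃` into the square-zero ideal
`𝔪/𝔪²`, so it kills `M̃²`, while it sends `1 ⊗ m` to the class of `m`.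

Surjectivity: `M̃` is the preimage of the diagonal ideal `I ⊆ K ⊗_k K` under the surjection
`K ⊗_k A → K ⊗_k K`, whose kernel is generated by `1 ⊗ 𝔪`. As `K/k` is formally unramified,
`I = I²`, hence `M̃ = M̃² + (1 ⊗ 𝔪)`; and `Ã` acts on `M̃/M̃²` through `ev`, so the `Ã`-span of
the classes of `1 ⊗ m` is their `K`-span.
-/

open IsLocalRing TensorProduct

section LocalAlgebra

variable (k A : Type*) [Field k] [CommRing A] [IsLocalRing A] [Algebra k A]

instance : IsScalarTower k A (ResidueField A) :=
  IsScalarTower.of_algebraMap_eq fun x =>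
    (IsLocalRing.ResidueField.map_residue (algebraMap k A) x).symm

/-- The evaluation map `Ã = K ⊗_k A → K`, `λ ⊗ a ↦ λ·a(x)`. -/
noncomputable def ev : (ResidueField A ⊗[k] A) →ₐ[ResidueField A] ResidueField A :=
  Algebra.TensorProduct.lift (AlgHom.id _ _) (IsScalarTower.toAlgHom k A (ResidueField A))
    fun _ _ => Commute.all _ _

/-- The ideal `M̃ = ker(ev) ⊆ Ã`. -/
noncomputable def Mker : Ideal (ResidueField A ⊗[k] A) := RingHom.ker (ev k A)

/-- For `m ∈ 𝔪`, the element `1 ⊗ m` of `M̃`. -/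
noncomputable def oneTmul (m : maximalIdeal A) : Mker k A :=
  ⟨(1 : ResidueField A) ⊗ₜ[k] (m : A), by
    simp only [Mker, RingHom.mem_ker, ev, Algebra.TensorProduct.lift_tmul, map_one, one_mul,
      AlgHom.coe_id, id_eq, IsScalarTower.coe_toAlgHom', ResidueField.algebraMap_eq]
    exact Ideal.Quotient.eq_zero_iff_mem.mpr m.2⟩

/-- For `a : A`, the element `1 ⊗ a − a(x) ⊗ 1` of `M̃`. -/
noncomputable def gen (a : A) : Mker k A :=
  ⟨(1 : ResidueField A) ⊗ₜ[k] a - residue A a ⊗ₜ[k] (1 : A), by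
    simp [Mker, RingHom.mem_ker, ev, Algebra.TensorProduct.lift_tmul]⟩

end LocalAlgebra

theorem Ideal.comap_le_sq_sup_ker {R S : Type*} [CommRing R] [CommRing S] {f : R →+* S}
    (hf : Function.Surjective f) {I : Ideal S} (hI : I ≤ I ^ 2) :
    I.comap f ≤ I.comap f ^ 2 ⊔ RingHom.ker f := by
  intro x hx
  have : f x ∈ (I.comap f ^ 2).map f := by
    rw [Ideal.map_pow, Ideal.map_comap_of_surjective f hf]
    exact hI hx
  rwa [← Ideal.mem_comap, Ideal.comap_map_of_surjective f hf] at this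

theorem Ideal.Cotangent.smul_eq_apply_smul {R B : Type*} [CommRing R] [CommRing B]
    [Algebra R B] (f : B →ₐ[R] R) (c : B) (z : (RingHom.ker f).Cotangent) : c • z = f c • z := by
  have hc : c - algebraMap R B (f c) ∈ RingHom.ker f := by simp [RingHom.mem_ker]
  rw [← algebraMap_smul B (f c) z, ← sub_eq_zero, ← sub_smul]
  exact Ideal.Cotangent.smul_eq_zero_of_mem hc z

theorem KaehlerDifferential.ideal_le_sq (R S : Type*) [CommRing R] [CommRing S] [Algebra R S]
    [Algebra.FormallyUnramified R S] :
    KaehlerDifferential.ideal R S ≤ KaehlerDifferential.ideal R S ^ 2 := fun x hx =>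
  (Ideal.toCotangent_eq_zero _ ⟨x, hx⟩).mp (Subsingleton.elim (α := Ω[S⁄R]) _ _)

section

open Algebra.TensorProduct

variable {k A : Type*} [Field k] [CommRing A] [IsLocalRing A] [Algebra k A]

theorem ev_tmul (c : ResidueField A) (a : A) : ev k A (c ⊗ₜ a) = c * residue A a := by
  simp [ev]

variable (k A) in
noncomputable def residueTensor :
    ResidueField A ⊗[k] A →ₐ[k] ResidueField A ⊗[k] ResidueField A :=
  map (AlgHom.id k _) (IsScalarTower.toAlgHom k A _)

theorem residueTensor_surjective : Function.Surjective (residueTensor k A) :=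
  map_surjective _ _ Function.surjective_id (residue_surjective (R := A))

theorem ker_residueTensor :
    RingHom.ker (residueTensor k A) = (maximalIdeal A).map (includeRight (R := k)) := by
  rw [residueTensor, lTensor_ker _ (residue_surjective (R := A))]
  congr
  exact ker_residue

theorem lmul'_comp_residueTensor :
    (lmul' k).comp (residueTensor k A) = (ev k A).restrictScalars k := by
  ext <;> simp [residueTensor, ev_tmul]

theorem Mker_eq_comap :
    Mker k A = (KaehlerDifferential.ideal k (ResidueField A)).comap (residueTensor k A) := by
  rw [AlgHom.comap_ker, lmul'_comp_residueTensor]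
  rfl

theorem map_includeRight_le_Mker : (maximalIdeal A).map (includeRight (R := k)) ≤ Mker k A := by
  rw [← ker_residueTensor, Mker_eq_comap, RingHom.ker_eq_comap_bot]
  exact Ideal.comap_mono bot_le

theorem Mker_le_sq_sup [Algebra.FormallyUnramified k (ResidueField A)] :
    Mker k A ≤ Mker k A ^ 2 ⊔ (maximalIdeal A).map (includeRight (R := k)) := by
  rw [← ker_residueTensor, Mker_eq_comap]
  exact Ideal.comap_le_sq_sup_ker residueTensor_surjective (KaehlerDifferential.ideal_le_sq _ _)

variable (k A) in
noncomputable def residueOfSq : A ⧸ maximalIdeal A ^ 2 →ₐ[k] ResidueField A :=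
  Ideal.Quotient.factorₐ k (Ideal.pow_le_self two_ne_zero)

theorem ker_residueOfSq_sq : RingHom.ker (residueOfSq k A) ^ 2 = ⊥ := by
  change RingHom.ker (Ideal.Quotient.factor (Ideal.pow_le_self two_ne_zero)) ^ 2 = ⊥
  rw [Ideal.Quotient.factor_ker, ← Ideal.map_pow, Ideal.map_quotient_self]

variable (k A) in
theorem exists_section_residueOfSq [Algebra.FormallySmooth k (ResidueField A)] :
    ∃ σ : ResidueField A →ₐ[k] A ⧸ maximalIdeal A ^ 2,
      (residueOfSq k A).comp σ = AlgHom.id k _ := by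
  have hsurj : Function.Surjective (residueOfSq k A) :=
    Ideal.Quotient.factor_surjective (Ideal.pow_le_self two_ne_zero)
  have hnil : IsNilpotent (RingHom.ker (residueOfSq k A).toRingHom) := ⟨2, ker_residueOfSq_sq⟩
  exact ⟨_, Algebra.FormallySmooth.comp_liftOfSurjective (AlgHom.id k _) _ hsurj hnil⟩

theorem residueOfSq_comp_productMap {σ : ResidueField A →ₐ[k] A ⧸ maximalIdeal A ^ 2}
    (hσ : (residueOfSq k A).comp σ = AlgHom.id k _) :
    (residueOfSq k A).comp (productMap σ (Ideal.Quotient.mkₐ k _)) =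
      (ev k A).restrictScalars k := by
  ext c
  · simpa [ev_tmul] using DFunLike.congr_fun hσ c
  · change residueOfSq k A (σ 1 * Ideal.Quotient.mk _ c) = 1 * residue A c
    rw [map_mul, map_one]
    rfl

theorem Mker_sq_le_ker_productMap {σ : ResidueField A →ₐ[k] A ⧸ maximalIdeal A ^ 2}
    (hσ : (residueOfSq k A).comp σ = AlgHom.id k _) :
    Mker k A ^ 2 ≤ RingHom.ker (productMap σ (Ideal.Quotient.mkₐ k (maximalIdeal A ^ 2))) := by
  have hM : Mker k A ≤
      (RingHom.ker (residueOfSq k A)).comap (productMap σ (Ideal.Quotient.mkₐ k _)) := by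
    intro x hx
    rw [Ideal.mem_comap, RingHom.mem_ker, ← AlgHom.comp_apply, residueOfSq_comp_productMap hσ]
    exact hx
  calc Mker k A ^ 2 ≤ _ := Ideal.pow_right_mono hM 2
    _ ≤ _ := Ideal.le_comap_pow _ 2
    _ = _ := by rw [ker_residueOfSq_sq, ← RingHom.ker_eq_comap_bot]

theorem mem_maximalIdeal_sq_of_one_tmul_mem_Mker_sq [Algebra.FormallySmooth k (ResidueField A)]
    {a : A} (ha : (1 : ResidueField A) ⊗ₜ[k] a ∈ Mker k A ^ 2) : a ∈ maximalIdeal A ^ 2 := by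
  obtain ⟨σ, hσ⟩ := exists_section_residueOfSq k A
  have := Mker_sq_le_ker_productMap hσ ha
  rwa [RingHom.mem_ker, productMap_apply_tmul, map_one, one_mul, Ideal.Quotient.mkₐ_eq_mk,
    Ideal.Quotient.eq_zero_iff_mem] at this

variable {ϑ : (maximalIdeal A).Cotangent →ₗ[ResidueField A] (Mker k A).Cotangent}
  (hϑ : ∀ m, ϑ ((maximalIdeal A).toCotangent m) = (Mker k A).toCotangent (oneTmul k A m))
include hϑ

theorem injective_of_formallySmooth [Algebra.FormallySmooth k (ResidueField A)] :
    Function.Injective ϑ := by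
  refine (injective_iff_map_eq_zero ϑ).mpr fun z hz => ?_
  obtain ⟨m, rfl⟩ := (maximalIdeal A).toCotangent_surjective z
  rw [hϑ, Ideal.toCotangent_eq_zero] at hz
  rw [Ideal.toCotangent_eq_zero]
  exact mem_maximalIdeal_sq_of_one_tmul_mem_Mker_sq hz

theorem toCotangent_mem_range_of_mem_map {x : ResidueField A ⊗[k] A}
    (hx : x ∈ (maximalIdeal A).map (includeRight (R := k))) :
    (Mker k A).toCotangent ⟨x, map_includeRight_le_Mker hx⟩ ∈ LinearMap.range ϑ := by
  induction hx using Submodule.span_induction with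
  | mem x hx =>
    obtain ⟨m, hm, rfl⟩ := hx
    exact ⟨_, hϑ ⟨m, hm⟩⟩
  | zero => exact ⟨0, by rw [map_zero]; rfl⟩
  | add x y _ _ ihx ihy => exact add_mem ihx ihy
  | smul c x hx ih =>
    convert Submodule.smul_mem _ (ev k A c) ih using 1
    exact ((Mker k A).toCotangent.map_smul c ⟨x, map_includeRight_le_Mker hx⟩).trans
      (Ideal.Cotangent.smul_eq_apply_smul (ev k A) c _)

theorem surjective_of_formallyUnramified [Algebra.FormallyUnramified k (ResidueField A)] :
    Function.Surjective ϑ := by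
  intro y
  obtain ⟨⟨x, hx⟩, rfl⟩ := (Mker k A).toCotangent_surjective y
  obtain ⟨u, hu, v, hv, rfl⟩ := Submodule.mem_sup.mp (Mker_le_sq_sup hx)
  have : (Mker k A).toCotangent ⟨u + v, hx⟩ =
      (Mker k A).toCotangent ⟨v, map_includeRight_le_Mker hv⟩ := by
    rw [Ideal.toCotangent_eq]
    simpa using hu
  rw [this]
  exact toCotangent_mem_range_of_mem_map hϑ hv

end

theorem stmt_11_general (k A : Type*) [Field k] [CommRing A] [IsLocalRing A] [Algebra k A]
    [Algebra.IsSeparable k (ResidueField A)]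
    (ϑ : (maximalIdeal A).Cotangent →ₗ[ResidueField A] (Mker k A).Cotangent)
    (hϑ : ∀ m : maximalIdeal A,
      ϑ ((maximalIdeal A).toCotangent m) = (Mker k A).toCotangent (oneTmul k A m)) :
    Function.Bijective ϑ :=
  have := Algebra.FormallyEtale.of_isSeparable k (ResidueField A)
  ⟨injective_of_formallySmooth hϑ, surjective_of_formallyUnramified hϑ⟩

/-- Let `k` be a field and `(A, 𝔪)` a local `k`-algebra whose residue field
`K = A/𝔪` is an algebraic and separable extension of `k`.  Then the `K`-linear map
`ϑ : 𝔪/𝔪² → M̃/M̃²` induced by `a ↦ 1 ⊗ a` is bijective. -/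
theorem stmt_11 (k A : Type*) [Field k] [CommRing A] [IsLocalRing A] [Algebra k A]
    [Algebra.IsAlgebraic k (ResidueField A)] [Algebra.IsSeparable k (ResidueField A)]
    (ϑ : (maximalIdeal A).Cotangent →ₗ[ResidueField A] (Mker k A).Cotangent)
    (hϑ : ∀ m : maximalIdeal A,
      ϑ ((maximalIdeal A).toCotangent m) = (Mker k A).toCotangent (oneTmul k A m)) :
    Function.Bijective ϑ :=
  stmt_11_general k A ϑ hϑ
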